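/- Let K : ℂ → ℝ be smooth, nonpositive, not identically zero, with |K(z)| ≤ Λ(1+|z|²)^{-l} for all z ∈ ℂ, for constants l > 1 and Λ > 0. Then for each constant k ∈ [l-2, l-1) ∩ (0, Λ/2], any two solutions u, u' of Δu + K e^{2u} = 0 on ℂ of the form 2u = v + k·log(1+|z|²) and 2u' = v' + k·log(1+|z|²), with v, v' : ℂ → ℝ smooth and bounded, coincide: u = u'. -/

import Mathlib

open MeasureTheory

/-- The Euclidean Laplacian `Δ = ∂²/∂x² + ∂²/∂y²` of a function on `ℂ ≅ ℝ²`. -/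
noncomputable def lap (f : ℂ → ℝ) (z : ℂ) : ℝ :=
  deriv (deriv (fun x : ℝ => f (z + x))) 0 +
  deriv (deriv (fun y : ℝ => f (z + y * Complex.I))) 0

open Filter Topology ContDiff

/-- Second-derivative test at an interior local max. -/
lemma deriv2_nonpos_of_isLocalMax {g : ℝ → ℝ}
    (h1 : ∀ᶠ x in 𝓝 (0:ℝ), DifferentiableAt ℝ g x)
    (h2 : DifferentiableAt ℝ (deriv g) 0)
    (h3 : IsLocalMax g 0) : deriv (deriv g) 0 ≤ 0 := by
  by_contra h
  push_neg at h
  have hg0 : deriv g 0 = 0 := h3.deriv_eq_zero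
  have hD : HasDerivAt (deriv g) (deriv (deriv g) 0) 0 := h2.hasDerivAt
  rw [hasDerivAt_iff_tendsto_slope] at hD
  have hpos' : ∀ᶠ x in 𝓝[≠] (0:ℝ), 0 < slope (deriv g) 0 x :=
    hD.eventually (eventually_gt_nhds h)
  have hpos : ∀ᶠ x in 𝓝 (0:ℝ), 0 < x → 0 < deriv g x := by
    rw [eventually_nhdsWithin_iff] at hpos'
    filter_upwards [hpos'] with x hx hx'
    have hs := hx (by simp [ne_of_gt hx'])
    have : slope (deriv g) 0 x = deriv g x / x := by
      simp [slope, hg0, vsub_eq_sub, div_eq_inv_mul]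
    rw [this] at hs
    by_contra hc
    push_neg at hc
    have := div_nonpos_of_nonpos_of_nonneg hc hx'.le
    linarith
  obtain ⟨η₁, hη₁, hd⟩ := Metric.eventually_nhds_iff.mp h1
  obtain ⟨η₂, hη₂, hp⟩ := Metric.eventually_nhds_iff.mp hpos
  obtain ⟨η₃, hη₃, hmax⟩ := Metric.eventually_nhds_iff.mp h3
  set m := min η₁ (min η₂ η₃) with hm
  have hm0 : 0 < m := lt_min hη₁ (lt_min hη₂ hη₃)
  set t := m / 2 with ht
  have ht0 : 0 < t := by positivity
  have htm : ∀ x : ℝ, 0 ≤ x → x ≤ t → (dist x 0 < η₁ ∧ dist x 0 < η₂ ∧ dist x 0 < η₃) := by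
    intro x hx0 hxt
    have : x < m := by linarith
    simp only [Real.dist_eq, sub_zero, abs_of_nonneg hx0]
    refine ⟨lt_of_lt_of_le this (min_le_left _ _), ?_, ?_⟩
    · exact lt_of_lt_of_le this (le_trans (min_le_right _ _) (min_le_left _ _))
    · exact lt_of_lt_of_le this (le_trans (min_le_right _ _) (min_le_right _ _))
  have hmono : StrictMonoOn g (Set.Icc 0 t) := by
    apply strictMonoOn_of_deriv_pos (convex_Icc 0 t)
    · intro x hx
      exact (hd (htm x hx.1 hx.2).1).continuousAt.continuousWithinAt
    · intro x hx
      rw [interior_Icc] at hx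
      exact hp (htm x hx.1.le hx.2.le).2.1 hx.1
  have h1' : g 0 < g t := hmono (Set.left_mem_Icc.2 ht0.le) (Set.right_mem_Icc.2 ht0.le) ht0
  have h2' : g t ≤ g 0 := hmax (htm t ht0.le le_rfl).2.2
  linarith

/-- second derivative of the 1D restriction of the comparison function. -/
lemma D2_line {g : ℝ → ℝ} (hg : ContDiff ℝ ∞ g) (a b β δ C : ℝ) (hab : a^2 + b^2 ≠ 0) :
    deriv (deriv (fun x => g x - β*(Real.log ((a+x)^2+b^2) - C) + δ*((a+x)^2+b^2))) 0
      = deriv (deriv g) 0 - β*(2*(b^2-a^2)/(a^2+b^2)^2) + δ*2 := by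
  set Q : ℝ → ℝ := fun x => (a+x)^2+b^2 with hQdef
  have hQ : ∀ x : ℝ, HasDerivAt Q (2*(a+x)) x := by
    intro x
    have h1 : HasDerivAt (fun x : ℝ => a + x) 1 x := (hasDerivAt_id x).const_add a
    have h2 := (h1.pow 2).add_const (b^2)
    simpa [mul_comm, hQdef] using h2
  have hQcont : ContinuousAt Q 0 := (hQ 0).continuousAt
  have hQ00 : Q 0 = a^2 + b^2 := by simp [hQdef]
  have hQne : ∀ᶠ x in 𝓝 (0:ℝ), Q x ≠ 0 := hQcont.eventually_ne (by rw [hQ00]; exact hab)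
  have hgd : Differentiable ℝ g := hg.differentiable (by norm_num)
  have hgd2 : Differentiable ℝ (deriv g) :=
    ((contDiff_infty_iff_deriv.mp hg).2).differentiable (by norm_num)
  -- derivative of G on the set where Q ≠ 0
  have hder : ∀ x : ℝ, Q x ≠ 0 →
      HasDerivAt (fun x => g x - β*(Real.log (Q x) - C) + δ*(Q x))
        (deriv g x - β*(2*(a+x)/Q x) + δ*(2*(a+x))) x := by
    intro x hx
    have h1 : HasDerivAt g (deriv g x) x := (hgd x).hasDerivAt
    have h2 : HasDerivAt (fun x => Real.log (Q x)) (2*(a+x)/Q x) x := (hQ x).log hx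
    exact ((h1.sub ((h2.sub_const C).const_mul β)).add ((hQ x).const_mul δ))
  have hev : deriv (fun x => g x - β*(Real.log (Q x) - C) + δ*(Q x))
      =ᶠ[𝓝 (0:ℝ)] fun x => deriv g x - β*(2*(a+x)/Q x) + δ*(2*(a+x)) := by
    filter_upwards [hQne] with x hx
    exact (hder x hx).deriv
  rw [hev.deriv_eq]
  -- now differentiate the explicit formula at 0
  have h1 : HasDerivAt (fun x : ℝ => a + x) 1 0 := (hasDerivAt_id 0).const_add a
  have hdiv : HasDerivAt (fun x => 2*(a+x)/Q x)
      ((2*1*Q 0 - 2*(a+0)*(2*(a+0)))/(Q 0)^2) 0 :=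
    HasDerivAt.div ((h1.const_mul 2)) (hQ 0) (by rw [hQ00]; exact hab)
  have hfin : HasDerivAt (fun x => deriv g x - β*(2*(a+x)/Q x) + δ*(2*(a+x)))
      (deriv (deriv g) 0 - β*((2*1*Q 0 - 2*(a+0)*(2*(a+0)))/(Q 0)^2) + δ*(2*1)) 0 :=
    (((hgd2 0).hasDerivAt).sub (hdiv.const_mul β)).add ((h1.const_mul 2).const_mul δ)
  rw [hfin.deriv]
  rw [hQ00]
  ring

lemma line_contDiff₁ (z : ℂ) : ContDiff ℝ ∞ (fun x : ℝ => z + x) :=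
  contDiff_const.add Complex.ofRealCLM.contDiff

lemma line_contDiff₂ (z : ℂ) : ContDiff ℝ ∞ (fun y : ℝ => z + y * Complex.I) :=
  contDiff_const.add (Complex.ofRealCLM.contDiff.mul contDiff_const)

lemma deriv2_comp_nonpos {f : ℂ → ℝ} {z : ℂ} {O : Set ℂ} (hO : IsOpen O) (hzO : z ∈ O)
    (hf : ContDiffOn ℝ ∞ f O) (hmax : IsLocalMax f z)
    (e : ℝ → ℂ) (he : ContDiff ℝ ∞ e) (he0 : e 0 = z) :
    deriv (deriv (fun x => f (e x))) 0 ≤ 0 := by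
  set s : Set ℝ := e ⁻¹' O with hsdef
  have hs : IsOpen s := hO.preimage he.continuous
  have h0s : (0:ℝ) ∈ s := by simp [hsdef, he0, hzO]
  have hgs : ContDiffOn ℝ ∞ (fun x => f (e x)) s :=
    hf.comp he.contDiffOn (fun x hx => hx)
  have hinf : (∞ : WithTop ℕ∞) + 1 ≤ ∞ := by
    rw [show (∞ : WithTop ℕ∞) + 1 = ∞ from rfl]
  have h1 : ∀ᶠ x in 𝓝 (0:ℝ), DifferentiableAt ℝ (fun x => f (e x)) x := by
    filter_upwards [hs.mem_nhds h0s] with x hx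
    exact (hgs.differentiableOn (by norm_num)).differentiableAt (hs.mem_nhds hx)
  have h2 : DifferentiableAt ℝ (deriv (fun x => f (e x))) 0 :=
    ((hgs.deriv_of_isOpen hs hinf).differentiableOn (by norm_num)).differentiableAt
      (hs.mem_nhds h0s)
  have h3 : IsLocalMax (fun x => f (e x)) 0 := by
    have ht : Tendsto e (𝓝 0) (𝓝 z) := by
      simpa [he0] using (he.continuous.tendsto 0)
    have := ht.eventually hmax
    simpa [IsLocalMax, IsMaxFilter, he0] using this
  exact deriv2_nonpos_of_isLocalMax h1 h2 h3

lemma lap_nonpos_of_isLocalMax {f : ℂ → ℝ} {z : ℂ} {O : Set ℂ} (hO : IsOpen O) (hzO : z ∈ O)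
    (hf : ContDiffOn ℝ ∞ f O) (hmax : IsLocalMax f z) : lap f z ≤ 0 := by
  have A := deriv2_comp_nonpos hO hzO hf hmax _ (line_contDiff₁ z) (by simp)
  have B := deriv2_comp_nonpos hO hzO hf hmax _ (line_contDiff₂ z) (by simp)
  have : lap f z = _ + _ := rfl
  exact add_nonpos A B

lemma contDiff_normSq_sub (c : ℂ) : ContDiff ℝ ∞ (fun w : ℂ => Complex.normSq (w - c)) := by
  have h : (fun w : ℂ => Complex.normSq (w - c))
      = fun w : ℂ => (w - c).re * (w - c).re + (w - c).im * (w - c).im := by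
    funext w; exact Complex.normSq_apply _
  rw [h]
  have hre : ContDiff ℝ ∞ (fun w : ℂ => (w - c).re) :=
    Complex.reCLM.contDiff.comp (contDiff_id.sub contDiff_const)
  have him : ContDiff ℝ ∞ (fun w : ℂ => (w - c).im) :=
    Complex.imCLM.contDiff.comp (contDiff_id.sub contDiff_const)
  exact (hre.mul hre).add (him.mul him)

lemma normSq_line₁ (w : ℂ) (x : ℝ) :
    Complex.normSq (w + x) = (w.re + x)^2 + w.im^2 := by
  simp [Complex.normSq_apply]; ring

lemma normSq_line₂ (w : ℂ) (y : ℝ) :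
    Complex.normSq (w + y * Complex.I) = w.re^2 + (w.im + y)^2 := by
  simp [Complex.normSq_apply]; ring

/-- Laplacian of the comparison function. -/
lemma lap_comparison (S : ℂ → ℝ) (hS : ContDiff ℝ ∞ S) (c : ℂ) (β δ C : ℝ)
    (x₁ : ℂ) (hne : x₁ ≠ c) :
    lap (fun w => S w - β*(Real.log (Complex.normSq (w - c)) - C)
        + δ * Complex.normSq (w - c)) x₁ = lap S x₁ + 4*δ := by
  set a := (x₁ - c).re with ha
  set b := (x₁ - c).im with hb
  have hab : a^2 + b^2 ≠ 0 := by
    have : Complex.normSq (x₁ - c) ≠ 0 := (Complex.normSq_pos.2 (sub_ne_zero.2 hne)).ne'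
    rwa [Complex.normSq_apply, ← ha, ← hb, ← pow_two, ← pow_two] at this
  have e₁ : (fun x : ℝ => (fun w => S w - β*(Real.log (Complex.normSq (w - c)) - C)
      + δ * Complex.normSq (w - c)) (x₁ + x))
      = fun x : ℝ => (fun t : ℝ => S (x₁ + t)) x - β*(Real.log ((a+x)^2+b^2) - C)
        + δ*((a+x)^2+b^2) := by
    funext x
    have : Complex.normSq (x₁ + x - c) = (a+x)^2+b^2 := by
      have h1 : (x₁ + (x:ℂ) - c) = (x₁ - c) + (x:ℂ) := by ring
      rw [h1, normSq_line₁]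
    simp only [this]
  have e₂ : (fun y : ℝ => (fun w => S w - β*(Real.log (Complex.normSq (w - c)) - C)
      + δ * Complex.normSq (w - c)) (x₁ + y * Complex.I))
      = fun y : ℝ => (fun t : ℝ => S (x₁ + t * Complex.I)) y
        - β*(Real.log ((b+y)^2+a^2) - C) + δ*((b+y)^2+a^2) := by
    funext y
    have : Complex.normSq (x₁ + y * Complex.I - c) = (b+y)^2+a^2 := by
      have h1 : (x₁ + (y:ℂ) * Complex.I - c) = (x₁ - c) + (y:ℂ) * Complex.I := by ring
      rw [h1, normSq_line₂]; ring
    simp only [this]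
  have hg₁ : ContDiff ℝ ∞ (fun t : ℝ => S (x₁ + t)) := hS.comp (line_contDiff₁ x₁)
  have hg₂ : ContDiff ℝ ∞ (fun t : ℝ => S (x₁ + t * Complex.I)) := hS.comp (line_contDiff₂ x₁)
  have hab' : b^2 + a^2 ≠ 0 := by rwa [add_comm] at hab
  have D1 := D2_line hg₁ a b β δ C hab
  have D2 := D2_line hg₂ b a β δ C hab'
  show deriv (deriv _) 0 + deriv (deriv _) 0 = _
  rw [e₁, e₂, D1, D2]
  show _ = deriv (deriv _) 0 + deriv (deriv _) 0 + 4*δ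
  have hcancel : β*(2*(b^2-a^2)/(a^2+b^2)^2) + β*(2*(a^2-b^2)/(b^2+a^2)^2) = 0 := by
    field_simp
    ring
  linarith [hcancel]

lemma key_estimate (S : ℂ → ℝ) (hS : ContDiff ℝ ∞ S) (M : ℝ) (hM : ∀ z, S z ≤ M)
    (hsub : ∀ z, 0 ≤ lap S z) (c z₀ : ℂ) (ρ m δ P : ℝ)
    (hρ0 : 0 < ρ) (hρd : ρ ≤ Complex.normSq (z₀ - c)) (hdP : Complex.normSq (z₀ - c) ≤ P)
    (hρP : ρ < P) (hδ : 0 < δ)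
    (hm : ∀ w, Complex.normSq (w - c) = ρ → S w ≤ m) :
    S z₀ ≤ m + ((M-m)/(Real.log P - Real.log ρ))*(Real.log (Complex.normSq (z₀-c)) - Real.log ρ)
      + δ*P := by
  set β := (M-m)/(Real.log P - Real.log ρ) with hβ
  set ψ := fun w => S w - β*(Real.log (Complex.normSq (w - c)) - Real.log ρ)
    + δ * Complex.normSq (w - c) with hψ
  set A := {z : ℂ | ρ ≤ Complex.normSq (z - c) ∧ Complex.normSq (z - c) ≤ P} with hA
  have hcont_n : Continuous (fun z : ℂ => Complex.normSq (z - c)) :=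
    (contDiff_normSq_sub c).continuous
  have hAclosed : IsClosed A :=
    (isClosed_le continuous_const hcont_n).inter (isClosed_le hcont_n continuous_const)
  have hAsub : A ⊆ Metric.closedBall c (Real.sqrt P) := by
    intro z hz
    rw [Metric.mem_closedBall, Complex.dist_eq, Complex.norm_def]
    exact Real.sqrt_le_sqrt hz.2
  have hAcomp : IsCompact A :=
    (isCompact_closedBall c _).of_isClosed_subset hAclosed hAsub
  have hz₀A : z₀ ∈ A := ⟨hρd, hdP⟩
  have hψcont : ContinuousOn ψ A := by
    refine ContinuousOn.add (ContinuousOn.sub hS.continuous.continuousOn ?_)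
      (continuousOn_const.mul hcont_n.continuousOn)
    refine continuousOn_const.mul (ContinuousOn.sub ?_ continuousOn_const)
    exact ContinuousOn.log hcont_n.continuousOn
      (fun z hz => (lt_of_lt_of_le hρ0 hz.1).ne')
  obtain ⟨x₁, hx₁A, hmax⟩ := hAcomp.exists_isMaxOn ⟨z₀, hz₀A⟩ hψcont
  have hden : 0 < Real.log P - Real.log ρ := sub_pos.2 (Real.log_lt_log hρ0 hρP)
  have hx₁bound : ψ x₁ ≤ m + δ*P := by
    rcases eq_or_lt_of_le hx₁A.1 with h | h
    · have he : ψ x₁ = S x₁ + δ*ρ := by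
        simp [hψ, ← h]
      rw [he]
      have h1 := hm x₁ h.symm
      have h2 : δ*ρ ≤ δ*P := by nlinarith
      linarith
    rcases eq_or_lt_of_le hx₁A.2 with h2 | h2
    · have hβP : β*(Real.log P - Real.log ρ) = M - m := div_mul_cancel₀ _ hden.ne'
      have he : ψ x₁ = S x₁ - (M - m) + δ*P := by
        rw [hψ]; simp only [h2, hβP]
      rw [he]
      have := hM x₁
      linarith
    · exfalso
      have hx₁c : x₁ ≠ c := by
        intro hcc
        rw [hcc] at h
        simp at h
        exact absurd h (not_lt.2 hρ0.le)
      have hO : IsOpen {w : ℂ | w ≠ c} := isOpen_ne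
      have hψsm : ContDiffOn ℝ ∞ ψ {w : ℂ | w ≠ c} := by
        refine ContDiffOn.add (ContDiffOn.sub hS.contDiffOn ?_)
          (contDiffOn_const.mul (contDiff_normSq_sub c).contDiffOn)
        refine contDiffOn_const.mul (ContDiffOn.sub ?_ contDiffOn_const)
        exact ContDiffOn.log (contDiff_normSq_sub c).contDiffOn
          (fun w hw => (Complex.normSq_pos.2 (sub_ne_zero.2 hw)).ne')
      have hU : IsOpen {z : ℂ | ρ < Complex.normSq (z - c) ∧ Complex.normSq (z - c) < P} :=
        (isOpen_lt continuous_const hcont_n).inter (isOpen_lt hcont_n continuous_const)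
      have hAnhds : A ∈ 𝓝 x₁ :=
        Filter.mem_of_superset (hU.mem_nhds ⟨h, h2⟩) (fun z hz => ⟨hz.1.le, hz.2.le⟩)
      have hloc : IsLocalMax ψ x₁ := hmax.isLocalMax hAnhds
      have h1 := lap_nonpos_of_isLocalMax hO hx₁c hψsm hloc
      have h2' := lap_comparison S hS c β δ (Real.log ρ) x₁ hx₁c
      rw [hψ] at h1
      rw [h2'] at h1
      have := hsub x₁
      linarith
  have hz₀ := hmax hz₀A
  have he₀ : ψ z₀ = S z₀ - β*(Real.log (Complex.normSq (z₀ - c)) - Real.log ρ)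
      + δ * Complex.normSq (z₀ - c) := rfl
  have hd0 : 0 ≤ Complex.normSq (z₀ - c) := Complex.normSq_nonneg _
  have : ψ z₀ ≤ m + δ*P := le_trans hz₀ hx₁bound
  rw [he₀] at this
  nlinarith [mul_nonneg hδ.le hd0]

lemma liouville (S : ℂ → ℝ) (hS : ContDiff ℝ ∞ S) (M : ℝ) (hM : ∀ z, S z ≤ M)
    (hsub : ∀ z, 0 ≤ lap S z) (c z₀ : ℂ) : S z₀ ≤ S c := by
  by_cases hzc : z₀ = c
  · simp [hzc]
  refine le_of_forall_pos_le_add fun ε hε => ?_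
  set d := Complex.normSq (z₀ - c) with hd'
  have hd : 0 < d := Complex.normSq_pos.2 (sub_ne_zero.2 hzc)
  obtain ⟨η, hη, hcont⟩ := Metric.continuousAt_iff.mp (hS.continuous.continuousAt (x := c)) (ε/2) (by linarith)
  set ρ := min (η^2/2) (d/2) with hρ'
  have hρ0 : 0 < ρ := lt_min (by positivity) (by linarith)
  have hρd : ρ < d := lt_of_le_of_lt (min_le_right _ _) (by linarith)
  set m := S c + ε/2 with hm'
  have hm : ∀ w, Complex.normSq (w - c) = ρ → S w ≤ m := by
    intro w hw
    have h1 : dist w c ^ 2 = Complex.normSq (w - c) := by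
      rw [Complex.dist_eq, Complex.sq_norm]
    have h2 : dist w c ^ 2 < η ^ 2 := by
      rw [h1, hw]
      calc ρ ≤ η^2/2 := min_le_left _ _
      _ < η^2 := by nlinarith
    have h3 : dist w c < η := by nlinarith [dist_nonneg (x := w) (y := c), abs_nonneg (dist w c)]
    have := hcont h3
    rw [Real.dist_eq] at this
    have := abs_lt.mp this
    rw [hm']
    linarith [this.2]
  -- remove δ
  have key2 : ∀ P, d < P →
      S z₀ ≤ m + ((M-m)/(Real.log P - Real.log ρ))*(Real.log d - Real.log ρ) := by
    intro P hP
    refine le_of_forall_pos_le_add fun ε' hε' => ?_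
    have hP0 : 0 < P := lt_trans hd hP
    have hk := key_estimate S hS M hM hsub c z₀ ρ m (ε'/P) P hρ0 hρd.le hP.le
      (lt_trans hρd hP) (by positivity) hm
    have : (ε'/P)*P = ε' := div_mul_cancel₀ _ hP0.ne'
    rw [this] at hk
    linarith
  set T := (M - m)*(Real.log d - Real.log ρ) with hT'
  have hlogdρ : 0 < Real.log d - Real.log ρ := sub_pos.2 (Real.log_lt_log hρ0 hρd)
  by_cases hT : T ≤ 0
  · have hk := key2 (d+1) (by linarith)
    have hden : 0 < Real.log (d+1) - Real.log ρ :=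
      sub_pos.2 (Real.log_lt_log hρ0 (by linarith))
    have hre : ((M-m)/(Real.log (d+1) - Real.log ρ))*(Real.log d - Real.log ρ)
        = T / (Real.log (d+1) - Real.log ρ) := by rw [hT']; ring
    rw [hre] at hk
    have : T / (Real.log (d+1) - Real.log ρ) ≤ 0 := div_nonpos_of_nonpos_of_nonneg hT hden.le
    linarith
  · push_neg at hT
    set P := max (d+1) (Real.exp (Real.log ρ + 2*T/ε)) with hP'
    have hPd : d < P := lt_of_lt_of_le (by linarith) (le_max_left _ _)
    have hP0 : 0 < P := lt_trans hd hPd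
    have hlogP : Real.log ρ + 2*T/ε ≤ Real.log P :=
      (Real.le_log_iff_exp_le hP0).2 (le_max_right _ _)
    have hden : 0 < Real.log P - Real.log ρ := by
      have h2T : 0 < 2*T/ε := by positivity
      linarith
    have hfrac : ((M-m)/(Real.log P - Real.log ρ))*(Real.log d - Real.log ρ) ≤ ε/2 := by
      rw [div_mul_eq_mul_div, div_le_iff₀ hden, ← hT']
      have h1 : ε/2 * (2*T/ε) = T := by field_simp
      nlinarith
    have hk := key2 P hPd
    linarith

lemma D2_sq {g : ℝ → ℝ} (hg : ContDiff ℝ ∞ g) :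
    deriv (deriv (fun x => (g x)^2)) 0
      = 2*(deriv g 0)^2 + 2*(g 0)*(deriv (deriv g) 0) := by
  have hgd : Differentiable ℝ g := hg.differentiable (by norm_num)
  have hgd2 : Differentiable ℝ (deriv g) :=
    ((contDiff_infty_iff_deriv.mp hg).2).differentiable (by norm_num)
  have h1 : deriv (fun x => (g x)^2) = fun x => (2 * g x) * deriv g x := by
    funext x
    have := ((hgd x).hasDerivAt.fun_pow 2).deriv
    simpa [mul_comm, mul_assoc] using this
  rw [h1]
  have h2 : HasDerivAt (fun x => (2 * g x) * deriv g x)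
      ((2 * deriv g 0) * deriv g 0 + (2 * g 0) * deriv (deriv g) 0) 0 :=
    (((hgd 0).hasDerivAt.const_mul 2).mul (hgd2 0).hasDerivAt)
  rw [h2.deriv]
  ring

lemma D2_sub {g h : ℝ → ℝ} (hg : ContDiff ℝ ∞ g) (hh : ContDiff ℝ ∞ h) :
    deriv (deriv (fun x => g x - h x)) 0 = deriv (deriv g) 0 - deriv (deriv h) 0 := by
  have hgd : Differentiable ℝ g := hg.differentiable (by norm_num)
  have hhd : Differentiable ℝ h := hh.differentiable (by norm_num)
  have hgd2 : Differentiable ℝ (deriv g) :=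
    ((contDiff_infty_iff_deriv.mp hg).2).differentiable (by norm_num)
  have hhd2 : Differentiable ℝ (deriv h) :=
    ((contDiff_infty_iff_deriv.mp hh).2).differentiable (by norm_num)
  have h1 : deriv (fun x => g x - h x) = fun x => deriv g x - deriv h x := by
    funext x; exact deriv_sub (hgd x) (hhd x)
  rw [h1, deriv_fun_sub (hgd2 0) (hhd2 0)]

lemma lap_sub (f g : ℂ → ℝ) (hf : ContDiff ℝ ∞ f) (hg : ContDiff ℝ ∞ g) (z : ℂ) :
    lap (fun w => f w - g w) z = lap f z - lap g z := by
  have h1 := D2_sub (hf.comp (line_contDiff₁ z)) (hg.comp (line_contDiff₁ z))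
  have h2 := D2_sub (hf.comp (line_contDiff₂ z)) (hg.comp (line_contDiff₂ z))
  simp only [Function.comp_def] at h1 h2
  show deriv (deriv _) 0 + deriv (deriv _) 0 = _
  rw [show (fun x : ℝ => (fun w => f w - g w) (z + x))
      = fun x : ℝ => f (z + x) - g (z + x) from rfl, h1]
  rw [show (fun y : ℝ => (fun w => f w - g w) (z + y * Complex.I))
      = fun y : ℝ => f (z + y * Complex.I) - g (z + y * Complex.I) from rfl, h2]
  show _ = (deriv (deriv _) 0 + deriv (deriv _) 0) - (deriv (deriv _) 0 + deriv (deriv _) 0)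
  ring

lemma lap_sq (W : ℂ → ℝ) (hW : ContDiff ℝ ∞ W) (z : ℂ) :
    lap (fun w => (W w)^2) z = 2*(W z)*(lap W z)
      + 2*((deriv (fun x : ℝ => W (z + x)) 0)^2
         + (deriv (fun y : ℝ => W (z + y * Complex.I)) 0)^2) := by
  have h1 := D2_sq (hW.comp (line_contDiff₁ z))
  have h2 := D2_sq (hW.comp (line_contDiff₂ z))
  simp only [Function.comp_def] at h1 h2
  show deriv (deriv _) 0 + deriv (deriv _) 0 = _
  rw [show (fun x : ℝ => (fun w => (W w)^2) (z + x))
      = fun x : ℝ => ((fun t : ℝ => W (z + t)) x)^2 from rfl, h1]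
  rw [show (fun y : ℝ => (fun w => (W w)^2) (z + y * Complex.I))
      = fun y : ℝ => ((fun t : ℝ => W (z + t * Complex.I)) y)^2 from rfl, h2]
  show _ = 2*(W z)*(deriv (deriv _) 0 + deriv (deriv _) 0) + _
  have e1 : W (z + ((0:ℝ):ℂ)) = W z := by norm_num
  have e2 : W (z + ((0:ℝ):ℂ) * Complex.I) = W z := by norm_num
  rw [e1, e2]
  ring

lemma lap_const (a : ℝ) (z : ℂ) : lap (fun _ => a) z = 0 := by
  show deriv (deriv _) 0 + deriv (deriv _) 0 = 0
  simp [deriv_const]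

/-- a function whose directional derivatives along `1` and `I` vanish everywhere is constant -/
lemma const_of_directional_derivs_zero (W : ℂ → ℝ) (hW : ContDiff ℝ ∞ W)
    (h1 : ∀ z, deriv (fun x : ℝ => W (z + x)) 0 = 0)
    (h2 : ∀ z, deriv (fun y : ℝ => W (z + y * Complex.I)) 0 = 0)
    (z z' : ℂ) : W z = W z' := by
  have hWd : Differentiable ℝ W := hW.differentiable (by norm_num)
  apply is_const_of_fderiv_eq_zero hWd
  intro w
  have key1 : ∀ c : ℂ, fderiv ℝ W c 1 = 0 := by
    intro c
    have he : HasDerivAt (fun x : ℝ => c + (x:ℂ)) 1 0 := by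
      simpa using (Complex.ofRealCLM.hasDerivAt (x := (0:ℝ))).const_add c
    have hc : HasDerivAt (fun x : ℝ => W (c + x)) (fderiv ℝ W c 1) 0 := by
      have := ((hWd (c + ((0:ℝ):ℂ))).hasFDerivAt).comp_hasDerivAt 0 he
      simpa [Function.comp_def] using this
    rw [← hc.deriv]
    exact h1 c
  have key2 : ∀ c : ℂ, fderiv ℝ W c Complex.I = 0 := by
    intro c
    have he : HasDerivAt (fun y : ℝ => c + (y:ℂ) * Complex.I) Complex.I 0 := by
      have := ((Complex.ofRealCLM.hasDerivAt (x := (0:ℝ))).mul_const Complex.I).const_add c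
      simpa using this
    have hc : HasDerivAt (fun y : ℝ => W (c + y * Complex.I)) (fderiv ℝ W c Complex.I) 0 := by
      have := ((hWd (c + ((0:ℝ):ℂ) * Complex.I)).hasFDerivAt).comp_hasDerivAt 0 he
      simpa [Function.comp_def] using this
    rw [← hc.deriv]
    exact h2 c
  apply ContinuousLinearMap.ext
  intro x
  have hx : x = x.re • (1:ℂ) + x.im • Complex.I := by
    simp [Complex.real_smul, Complex.re_add_im]
  rw [hx, map_add, _root_.map_smul, _root_.map_smul, key1 w, key2 w]
  simp

/-- Proposition 3.2 (uniqueness): for `k ∈ [l-2, l-1) ∩ (0, Λ/2]`, any two solutions of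
`Δu + K e^{2u} = 0` of the form `2u = v + k log(1+|z|²)` with `v` smooth bounded coincide. -/
theorem stmt_10 (K : ℂ → ℝ) (hK : ContDiff ℝ (⊤ : ℕ∞) K) (hKnp : ∀ z, K z ≤ 0) (hKne : ∃ z, K z ≠ 0)
    (l Λ : ℝ) (hl : 1 < l) (hΛ : 0 < Λ)
    (hdecay : ∀ z : ℂ, |K z| ≤ Λ * (1 + ‖z‖ ^ 2) ^ (-l))
    (k : ℝ) (hk1 : l - 2 ≤ k) (hk2 : k < l - 1) (hk3 : 0 < k) (hk4 : k ≤ Λ / 2)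
    (u u' v v' : ℂ → ℝ) (hv : ContDiff ℝ (⊤ : ℕ∞) v) (hv' : ContDiff ℝ (⊤ : ℕ∞) v')
    (hb : ∃ B : ℝ, ∀ z, |v z| ≤ B) (hb' : ∃ B : ℝ, ∀ z, |v' z| ≤ B)
    (hform : ∀ z : ℂ, 2 * u z = v z + k * Real.log (1 + ‖z‖ ^ 2))
    (hform' : ∀ z : ℂ, 2 * u' z = v' z + k * Real.log (1 + ‖z‖ ^ 2))
    (hsol : ∀ z : ℂ, lap u z + K z * Real.exp (2 * u z) = 0)
    (hsol' : ∀ z : ℂ, lap u' z + K z * Real.exp (2 * u' z) = 0) :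
    u = u' := by
  obtain ⟨z₀, hz₀⟩ := hKne
  obtain ⟨B, hB⟩ := hb
  obtain ⟨B', hB'⟩ := hb'
  -- smoothness of u and u'
  have hnormSq : ContDiff ℝ ∞ (fun z : ℂ => Complex.normSq z) := by
    have := contDiff_normSq_sub 0
    simpa using this
  have hL : ContDiff ℝ ∞ (fun z : ℂ => Real.log (1 + ‖z‖ ^ 2)) := by
    have habs : (fun z : ℂ => Real.log (1 + ‖z‖ ^ 2))
        = fun z : ℂ => Real.log (1 + Complex.normSq z) := by
      funext z; rw [Complex.sq_norm]
    rw [habs]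
    exact ContDiff.log (contDiff_const.add hnormSq)
      (fun z => by have := Complex.normSq_nonneg z; intro h; linarith)
  have hu : u = fun z => (v z + k * Real.log (1 + ‖z‖ ^ 2))/2 :=
    funext fun z => by linarith [hform z]
  have hu' : u' = fun z => (v' z + k * Real.log (1 + ‖z‖ ^ 2))/2 :=
    funext fun z => by linarith [hform' z]
  have husm : ContDiff ℝ ∞ u := by
    rw [hu]; exact ((hv.of_le (by simp)).add (contDiff_const.mul hL)).div_const 2
  have husm' : ContDiff ℝ ∞ u' := by
    rw [hu']; exact ((hv'.of_le (by simp)).add (contDiff_const.mul hL)).div_const 2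
  -- W := u - u'
  have hWsm : ContDiff ℝ ∞ (fun z => u z - u' z) := husm.sub husm'
  have hWval : ∀ z, u z - u' z = (v z - v' z)/2 := fun z => by
    have := hform z; have := hform' z; linarith
  have hWb : ∀ z, |u z - u' z| ≤ (B + B')/2 := by
    intro z
    rw [hWval z, abs_div]
    have h1 : |v z - v' z| ≤ B + B' := (abs_sub _ _).trans (add_le_add (hB z) (hB' z))
    rw [abs_of_pos (by norm_num : (0:ℝ) < 2)]
    linarith
  -- Laplacian of W
  have hlapW : ∀ z, lap (fun w => u w - u' w) z
      = K z * (Real.exp (2 * u' z) - Real.exp (2 * u z)) := by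
    intro z
    rw [lap_sub u u' husm husm' z]
    have h1 := hsol z
    have h2 := hsol' z
    ring_nf
    ring_nf at h1 h2
    linarith
  -- sign of W * lap W
  have hsign : ∀ z, 0 ≤ (u z - u' z) * lap (fun w => u w - u' w) z := by
    intro z
    rw [hlapW z]
    rcases le_total 0 (u z - u' z) with h | h
    · have hexp : Real.exp (2 * u' z) ≤ Real.exp (2 * u z) := Real.exp_le_exp.2 (by linarith)
      have hKE : 0 ≤ (-(K z)) * (Real.exp (2 * u z) - Real.exp (2 * u' z)) :=
        mul_nonneg (by linarith [hKnp z]) (by linarith)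
      have h1 : 0 ≤ K z * (Real.exp (2 * u' z) - Real.exp (2 * u z)) := by nlinarith
      exact mul_nonneg h h1
    · have hexp : Real.exp (2 * u z) ≤ Real.exp (2 * u' z) := Real.exp_le_exp.2 (by linarith)
      have hKE : 0 ≤ (-(K z)) * (Real.exp (2 * u' z) - Real.exp (2 * u z)) :=
        mul_nonneg (by linarith [hKnp z]) (by linarith)
      nlinarith [mul_nonneg (neg_nonneg.mpr h) hKE]
  -- S := W²
  have hSsm : ContDiff ℝ ∞ (fun z => (u z - u' z)^2) := hWsm.pow 2
  have hSb : ∀ z, (u z - u' z)^2 ≤ ((B + B')/2)^2 := by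
    intro z
    have h := hWb z
    have := abs_nonneg (u z - u' z)
    nlinarith [abs_le.mp h]
  have hlapS : ∀ z, lap (fun w => (u w - u' w)^2) z
      = 2*(u z - u' z)*(lap (fun w => u w - u' w) z)
      + 2*((deriv (fun x : ℝ => u (z + x) - u' (z + x)) 0)^2
         + (deriv (fun y : ℝ => u (z + y * Complex.I) - u' (z + y * Complex.I)) 0)^2) :=
    fun z => lap_sq (fun w => u w - u' w) hWsm z
  have hSsub : ∀ z, 0 ≤ lap (fun w => (u w - u' w)^2) z := by
    intro z
    rw [hlapS z]
    nlinarith [hsign z, sq_nonneg (deriv (fun x : ℝ => u (z + x) - u' (z + x)) 0),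
      sq_nonneg (deriv (fun y : ℝ => u (z + y * Complex.I) - u' (z + y * Complex.I)) 0)]
  -- Liouville: S is constant
  have hSconst : ∀ z, (u z - u' z)^2 = (u 0 - u' 0)^2 := by
    intro z
    exact le_antisymm
      (liouville _ hSsm (((B + B')/2)^2) hSb hSsub 0 z)
      (liouville _ hSsm (((B + B')/2)^2) hSb hSsub z 0)
  have hSfun : (fun w => (u w - u' w)^2) = fun _ => (u 0 - u' 0)^2 := funext hSconst
  have hlapS0 : ∀ z, lap (fun w => (u w - u' w)^2) z = 0 := by
    intro z; rw [hSfun]; exact lap_const _ z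
  -- directional derivatives of W vanish
  have hdirs : ∀ z, deriv (fun x : ℝ => u (z + x) - u' (z + x)) 0 = 0
      ∧ deriv (fun y : ℝ => u (z + y * Complex.I) - u' (z + y * Complex.I)) 0 = 0 := by
    intro z
    have h0 := hlapS0 z
    rw [hlapS z] at h0
    have hs := hsign z
    constructor <;> nlinarith [sq_nonneg (deriv (fun x : ℝ => u (z + x) - u' (z + x)) 0),
      sq_nonneg (deriv (fun y : ℝ => u (z + y * Complex.I) - u' (z + y * Complex.I)) 0)]
  -- W constant
  have hWc : ∀ z z', u z - u' z = u z' - u' z' := by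
    intro z z'
    exact const_of_directional_derivs_zero (fun w => u w - u' w) hWsm
      (fun c => (hdirs c).1) (fun c => (hdirs c).2) z z'
  -- lap W vanishes (W constant)
  have hWfun : (fun w => u w - u' w) = fun _ => u z₀ - u' z₀ := funext fun z => hWc z z₀
  have hlapW0 : lap (fun w => u w - u' w) z₀ = 0 := by
    rw [hWfun]; exact lap_const _ z₀
  -- at z₀, K z₀ ≠ 0 forces u z₀ = u' z₀
  have hexp0 : K z₀ * (Real.exp (2 * u' z₀) - Real.exp (2 * u z₀)) = 0 := by
    rw [← hlapW z₀]; exact hlapW0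
  have heq : Real.exp (2 * u' z₀) = Real.exp (2 * u z₀) := by
    rcases mul_eq_zero.mp hexp0 with h | h
    · exact absurd h hz₀
    · linarith
  have huz₀ : u z₀ = u' z₀ := by
    have := Real.exp_eq_exp.mp heq
    linarith
  funext z
  have := hWc z z₀
  linarith
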